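/- arXiv:2411.10527 — 2 statements merged into one kernel-verified Lean document; each statement's English description precedes it below -/
import Mathlib

section
/- Let μ ∈ (π/2, π) and set τ* = arccos(cos²(μ/2)). Then: (1) cos τ* = cos²(μ/2), so the scattering condition holds with equality; (2) sin²(τ*/2)/(sin((μ−τ*)/2)·sin((μ+τ*)/2)) = 1, so the mutual information area difference ΔA_MI = ln(1) = 0; (3) the python's lunch area difference ΔA_PL = ln(csc²(μ/2)) = −2 ln(sin(μ/2)) is strictly positive. Hence for every α₀ > 0, the inequality ΔA_MI ≥ α₀ · ΔA_PL fails. -/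
open Real

theorem two_interval_counterexample (μ : ℝ) (hμl : π / 2 < μ) (hμu : μ < π) :
    let τ := arccos (cos (μ / 2) ^ 2)
    -- (1) the scattering condition holds with equality
    cos τ = cos (μ / 2) ^ 2 ∧
    -- (2) the mutual information area difference vanishes: the ratio is 1
    sin (τ / 2) ^ 2 / (sin ((μ - τ) / 2) * sin ((μ + τ) / 2)) = 1 ∧
    -- (3) the python's lunch area difference ΔA_PL = ln(csc²(μ/2)) = −2 ln sin(μ/2) > 0
    0 < Real.log ((sin (μ / 2))⁻¹ ^ 2) ∧
    Real.log ((sin (μ / 2))⁻¹ ^ 2) = -2 * Real.log (sin (μ / 2)) ∧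
    -- hence ΔA_MI ≥ α₀ ΔA_PL fails for every α₀ > 0
    (∀ α₀ : ℝ, 0 < α₀ →
      ¬ (Real.log (sin (τ / 2) ^ 2 / (sin ((μ - τ) / 2) * sin ((μ + τ) / 2))) ≥
          α₀ * Real.log ((sin (μ / 2))⁻¹ ^ 2))) := by
  intro τ
  have hπ : (0:ℝ) < π := Real.pi_pos
  have hcb1 : -1 ≤ cos (μ / 2) ^ 2 := by nlinarith [sq_nonneg (cos (μ/2))]
  have hcb2 : cos (μ / 2) ^ 2 ≤ 1 := by
    nlinarith [Real.neg_one_le_cos (μ/2), Real.cos_le_one (μ/2)]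
  have hct : cos τ = cos (μ / 2) ^ 2 := Real.cos_arccos hcb1 hcb2
  have hs : 0 < sin (μ / 2) :=
    Real.sin_pos_of_pos_of_lt_pi (by linarith) (by linarith)
  have hcpos : 0 < cos (μ / 2) :=
    Real.cos_pos_of_mem_Ioo ⟨by linarith, by linarith⟩
  have hsc : sin (μ / 2) ^ 2 + cos (μ / 2) ^ 2 = 1 := Real.sin_sq_add_cos_sq _
  have hs1 : sin (μ / 2) < 1 := by nlinarith
  have hμc : cos μ = 2 * cos (μ / 2) ^ 2 - 1 := by
    have h := Real.cos_two_mul (μ / 2)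
    rw [show 2 * (μ / 2) = μ by ring] at h
    linarith
  -- denominator
  have hd : sin ((μ - τ) / 2) * sin ((μ + τ) / 2) = sin (μ / 2) ^ 2 / 2 := by
    have hc := Real.cos_sub_cos τ μ
    have h1 : sin ((μ - τ) / 2) = -sin ((τ - μ) / 2) := by
      rw [show (μ - τ) / 2 = -((τ - μ) / 2) by ring, Real.sin_neg]
    have h2 : sin ((μ + τ) / 2) = sin ((τ + μ) / 2) := by ring_nf
    rw [h1, h2]
    nlinarith [hc]
  -- numerator
  have hn : sin (τ / 2) ^ 2 = sin (μ / 2) ^ 2 / 2 := by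
    have h := Real.cos_two_mul (τ / 2)
    rw [show 2 * (τ / 2) = τ by ring] at h
    have hsc2 : sin (τ / 2) ^ 2 + cos (τ / 2) ^ 2 = 1 := Real.sin_sq_add_cos_sq _
    nlinarith
  have hdne : sin (μ / 2) ^ 2 / 2 ≠ 0 := by positivity
  have hratio : sin (τ / 2) ^ 2 / (sin ((μ - τ) / 2) * sin ((μ + τ) / 2)) = 1 := by
    rw [hn, hd, div_self hdne]
  have hlogeq : Real.log ((sin (μ / 2))⁻¹ ^ 2) = -2 * Real.log (sin (μ / 2)) := by
    rw [Real.log_pow, Real.log_inv]; ring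
  have hlogneg : Real.log (sin (μ / 2)) < 0 := Real.log_neg hs hs1
  have hlogpos : 0 < Real.log ((sin (μ / 2))⁻¹ ^ 2) := by
    rw [hlogeq]; linarith
  refine ⟨hct, hratio, hlogpos, hlogeq, ?_⟩
  intro α₀ hα₀ hge
  rw [hratio, Real.log_one] at hge
  nlinarith
end

section
/- For every real x > 0, one has x · tanh(x) > ln(cosh(x)). Consequently, the function h(m) = ln(cosh(π m))/m is strictly increasing on (0, ∞), and the BTZ critical angle θ_crit(m) = π − ln(cosh(π m))/m (with m = √M) is strictly decreasing in m on (0, ∞). -/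
open Real Set

lemma hasDerivAt_tanh' (x : ℝ) : HasDerivAt Real.tanh (1 / Real.cosh x ^ 2) x := by
  have h : HasDerivAt (fun y => Real.sinh y / Real.cosh y)
      ((Real.cosh x * Real.cosh x - Real.sinh x * Real.sinh x) / Real.cosh x ^ 2) x :=
    (Real.hasDerivAt_sinh x).div (Real.hasDerivAt_cosh x) (Real.cosh_pos x).ne'
  have : (Real.cosh x * Real.cosh x - Real.sinh x * Real.sinh x) = 1 := by
    have := Real.cosh_sq_sub_sinh_sq x; nlinarith [this]
  have hfun : Real.tanh = fun y => Real.sinh y / Real.cosh y := funext fun y => Real.tanh_eq_sinh_div_cosh y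
  rw [hfun]
  simpa [this] using h

lemma key (x : ℝ) (hx : 0 < x) : Real.log (Real.cosh x) < x * Real.tanh x := by
  set F : ℝ → ℝ := fun y => y * Real.tanh y - Real.log (Real.cosh y) with hF
  have hderiv : ∀ y : ℝ, HasDerivAt F (y / Real.cosh y ^ 2) y := by
    intro y
    have h1 : HasDerivAt (fun z : ℝ => z * Real.tanh z)
        (1 * Real.tanh y + y * (1 / Real.cosh y ^ 2)) y :=
      (hasDerivAt_id y).mul (hasDerivAt_tanh' y)
    have h2 : HasDerivAt (fun z => Real.log (Real.cosh z)) (Real.sinh y / Real.cosh y) y :=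
      (Real.hasDerivAt_cosh y).log (Real.cosh_pos y).ne'
    have := h1.sub h2
    have heq : 1 * Real.tanh y + y * (1 / Real.cosh y ^ 2) - Real.sinh y / Real.cosh y
        = y / Real.cosh y ^ 2 := by
      rw [Real.tanh_eq_sinh_div_cosh]; ring
    rw [heq] at this
    exact this
  have hmono : StrictMonoOn F (Ici (0:ℝ)) := by
    apply strictMonoOn_of_deriv_pos (convex_Ici 0)
    · exact fun y _ => (hderiv y).differentiableAt.continuousAt.continuousWithinAt
    · intro y hy
      rw [interior_Ici] at hy
      rw [(hderiv y).deriv]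
      exact div_pos hy (pow_pos (Real.cosh_pos y) 2)
  have h0 : F 0 = 0 := by simp [hF]
  have := hmono (self_mem_Ici) (le_of_lt hx : (0:ℝ) ≤ x) hx
  rw [h0] at this
  simpa [hF] using this

theorem btz_critical_angle_decreasing :
    (∀ x : ℝ, 0 < x → Real.log (Real.cosh x) < x * Real.tanh x) ∧
    StrictMonoOn (fun m : ℝ => Real.log (Real.cosh (π * m)) / m) (Ioi 0) ∧
    StrictAntiOn (fun m : ℝ => π - Real.log (Real.cosh (π * m)) / m) (Ioi 0) := by
  have hkey := key
  have hmono : StrictMonoOn (fun m : ℝ => Real.log (Real.cosh (π * m)) / m) (Ioi 0) := by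
    have hderiv : ∀ m : ℝ, 0 < m → HasDerivAt (fun m : ℝ => Real.log (Real.cosh (π * m)) / m)
        ((π * Real.tanh (π * m) * m - Real.log (Real.cosh (π * m)) * 1) / m ^ 2) m := by
      intro m hm
      have h1 : HasDerivAt (fun m : ℝ => Real.log (Real.cosh (π * m)))
          (Real.sinh (π * m) / Real.cosh (π * m) * π) m := by
        have : HasDerivAt (fun m : ℝ => π * m) π m := by
          simpa using (hasDerivAt_id m).const_mul π
        exact (((Real.hasDerivAt_cosh (π * m)).comp m this).log (Real.cosh_pos _).ne').congr_deriv
          (by simp [Function.comp]; ring)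
      have h1' : HasDerivAt (fun m : ℝ => Real.log (Real.cosh (π * m)))
          (π * Real.tanh (π * m)) m := by
        rw [Real.tanh_eq_sinh_div_cosh]; exact h1.congr_deriv (by ring)
      exact h1'.div (hasDerivAt_id m) hm.ne'
    apply strictMonoOn_of_deriv_pos (convex_Ioi 0)
    · exact fun m hm => ((hderiv m hm).differentiableAt).continuousAt.continuousWithinAt
    · intro m hm
      rw [interior_Ioi] at hm
      rw [(hderiv m hm).deriv]
      have hk := hkey (π * m) (mul_pos Real.pi_pos hm)
      have h2 : 0 < π * Real.tanh (π * m) * m - Real.log (Real.cosh (π * m)) * 1 := by nlinarith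
      exact div_pos h2 (pow_pos hm 2)
  refine ⟨hkey, hmono, ?_⟩
  intro a ha b hb hab
  have := hmono ha hb hab
  simp only [sub_lt_sub_iff_left]
  linarith
end
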